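/- There is no Kripke structure K whose set of traces T satisfies: T is nonempty, and for every t ∈ T there exists t' ∈ T such that (for all j, a ∈ t(j) implies a ∈ t'(j)) and (there exists j with a ∉ t(j) and a ∈ t'(j)). -/

import Mathlib

/-! The pointwise order of the condition refines the lexicographic order of `a`-bit sequences,
so a trace whose bit sequence is lexicographically greatest cannot be strictly dominated.
Such a trace exists because the runs of a finite Kripke structure form a compact subset of
`ℕ → Q`: fixing the bits greedily, one position at a time, gives a decreasing sequence of
nonempty closed sets of runs, whose intersection is nonempty. -/

/-- A Kripke structure over atomic propositions `AP` with state space `Q`. -/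
structure Kripke (AP Q : Type*) [Fintype Q] where
  δ : Q → Set Q
  δ_nonempty : ∀ q, (δ q).Nonempty
  init : Q
  lab : Q → Set AP

/-- The set of traces of a Kripke structure: pointwise labellings of infinite runs
from the initial state. -/
def Kripke.Traces {AP Q : Type*} [Fintype Q] (K : Kripke AP Q) :
    Set (ℕ → Set AP) :=
  {t | ∃ ρ : ℕ → Q, ρ 0 = K.init ∧ (∀ j, ρ (j + 1) ∈ K.δ (ρ j)) ∧
    ∀ j, t j = K.lab (ρ j)}

theorem Prop.lt_iff_not_and {p q : Prop} : p < q ↔ ¬p ∧ q := by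
  simp only [lt_iff_le_not_ge, le_Prop_eq]
  tauto

section LexGreedy

variable {X : Type*} (S : Set X) (f : X → ℕ → Prop)

def lexGreedy : ℕ → Set X
  | 0 => S
  | n + 1 => {x ∈ lexGreedy n | (∃ y ∈ lexGreedy n, f y n) → f x n}

theorem lexGreedy_succ_subset (n : ℕ) : lexGreedy S f (n + 1) ⊆ lexGreedy S f n :=
  fun _ hx => hx.1

theorem lexGreedy_nonempty (hne : S.Nonempty) (n : ℕ) : (lexGreedy S f n).Nonempty := by
  induction n with
  | zero => exact hne
  | succ n ih =>
    by_cases h : ∃ y ∈ lexGreedy S f n, f y n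
    · obtain ⟨y, hy, hfy⟩ := h
      exact ⟨y, hy, fun _ => hfy⟩
    · obtain ⟨x, hx⟩ := ih
      exact ⟨x, hx, fun h' => absurd h' h⟩

theorem isClosed_lexGreedy [TopologicalSpace X] (hS : IsClosed S)
    (hf : ∀ n, IsClosed {x | f x n}) (n : ℕ) : IsClosed (lexGreedy S f n) := by
  induction n with
  | zero => exact hS
  | succ n ih =>
    by_cases h : ∃ y ∈ lexGreedy S f n, f y n
    · simp only [lexGreedy, h, true_imp_iff]
      exact ih.inter (hf n)
    · simpa only [lexGreedy, h, false_imp_iff, Set.sep_true] using ih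

theorem mem_lexGreedy_of_forall_lt_eq {x y : X} (hx : ∀ n, x ∈ lexGreedy S f n) (hy : y ∈ S) :
    ∀ j, (∀ i < j, f y i = f x i) → y ∈ lexGreedy S f j
  | 0, _ => hy
  | j + 1, hagree => by
    have hyj := mem_lexGreedy_of_forall_lt_eq hx hy j fun i hi => hagree i (by omega)
    refine ⟨hyj, fun h => ?_⟩
    rw [hagree j (Nat.lt_add_one j)]
    exact (hx (j + 1)).2 h

end LexGreedy

theorem IsCompact.exists_forall_toLex_le {X : Type*} [TopologicalSpace X] {S : Set X}
    (hSc : IsCompact S) (hS : IsClosed S) (hne : S.Nonempty) (f : X → ℕ → Prop)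
    (hf : ∀ n, IsClosed {x | f x n}) : ∃ x ∈ S, ∀ y ∈ S, toLex (f y) ≤ toLex (f x) := by
  obtain ⟨x, hx⟩ := hSc.nonempty_iInter_of_sequence_nonempty_isCompact_isClosed
    (lexGreedy S f) (lexGreedy_succ_subset S f) (lexGreedy_nonempty S f hne)
    (isClosed_lexGreedy S f hS hf)
  rw [Set.mem_iInter] at hx
  refine ⟨x, hx 0, fun y hy => ?_⟩
  by_contra! hlt
  obtain ⟨j, hagree, hlt⟩ := hlt
  obtain ⟨hxj, hyj⟩ := Prop.lt_iff_not_and.1 hlt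
  have hy_greedy := mem_lexGreedy_of_forall_lt_eq S f hx hy j fun i hi => (hagree i hi).symm
  exact hxj ((hx (j + 1)).2 ⟨y, hy_greedy, hyj⟩)

namespace Kripke

variable {AP Q : Type*} [Fintype Q]

def Runs (K : Kripke AP Q) : Set (ℕ → Q) :=
  {ρ | ρ 0 = K.init ∧ ∀ j, ρ (j + 1) ∈ K.δ (ρ j)}

theorem isClosed_runs [TopologicalSpace Q] [DiscreteTopology Q] (K : Kripke AP Q) :
    IsClosed K.Runs := by
  rw [Runs, Set.ofPred_and, Set.ofPred_forall]
  have hev (j : ℕ) : Continuous fun ρ : ℕ → Q => ρ j := continuous_apply j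
  exact ((isClosed_discrete {K.init}).preimage (hev 0)).inter <| isClosed_iInter fun j =>
    (isClosed_discrete {p : Q × Q | p.2 ∈ K.δ p.1}).preimage ((hev j).prodMk (hev (j + 1)))

theorem exists_trace_forall_toLex_le (K : Kripke AP Q) (a : AP)
    (hne : K.Traces.Nonempty) :
    ∃ t ∈ K.Traces, ∀ s ∈ K.Traces, toLex (fun n => a ∈ s n) ≤ toLex (fun n => a ∈ t n) := by
  let _ : TopologicalSpace Q := ⊥
  have _ : DiscreteTopology Q := ⟨rfl⟩
  obtain ⟨_, σ, hσ0, hσ, -⟩ := hne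
  obtain ⟨ρ, ⟨hρ0, hρ⟩, hmax⟩ := K.isClosed_runs.isCompact.exists_forall_toLex_le
    K.isClosed_runs ⟨σ, hσ0, hσ⟩ (fun ρ n => a ∈ K.lab (ρ n))
    fun n => (isClosed_discrete {q | a ∈ K.lab q}).preimage
      (continuous_apply n : Continuous fun ρ : ℕ → Q => ρ n)
  refine ⟨fun n => K.lab (ρ n), ⟨ρ, hρ0, hρ, fun _ => rfl⟩, ?_⟩
  rintro s ⟨ρ', hρ'0, hρ', hs⟩
  simpa only [hs] using hmax ρ' ⟨hρ'0, hρ'⟩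

end Kripke

theorem no_kripke_model {Q : Type*} [Fintype Q] (K : Kripke Unit Q) :
    ¬ (K.Traces.Nonempty ∧
      ∀ t ∈ K.Traces, ∃ t' ∈ K.Traces,
        (∀ j, () ∈ t j → () ∈ t' j) ∧ (∃ j, () ∉ t j ∧ () ∈ t' j)) := by
  rintro ⟨hne, hdom⟩
  obtain ⟨t, ht, hmax⟩ := K.exists_trace_forall_toLex_le () hne
  obtain ⟨t', ht', hle, j, hjt, hjt'⟩ := hdom t ht
  have hlt : (fun n => () ∈ t n) < fun n => () ∈ t' n :=
    Pi.lt_def.2 ⟨hle, j, Prop.lt_iff_not_and.2 ⟨hjt, hjt'⟩⟩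
  exact (hmax t' ht').not_gt (Pi.toLex_strictMono hlt)
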